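/- Slicing theorem: Let S be a ∘∧-closed atomizable subset of a sequential formalism F = (A, U, I) whose algebraically closed scenarios over A are satisfiable. If (D1) each slice Sᵢ is minimal, (D2) S is dissociable, and (D3) every ↱-consistent relation R ∈ S is satisfiable, then every algebraically consistent network over S is satisfiable. If moreover S is ↱-closed, then S is algebraically tractable. -/
import Mathlib


open scoped Classical

/-- An atom (basic relation) of a Boolean algebra: a nonzero element `b` such that
for every `r`, `r ⊓ b = b` or `r ⊓ b = ⊥`. -/
def IsAtomRel {α : Type*} [BooleanAlgebra α] (b : α) : Prop :=
  b ≠ ⊥ ∧ ∀ r : α, r ⊓ b = b ∨ r ⊓ b = ⊥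

/-- The finset of atoms below `r` (`r ⊆ r'` means `r ⊔ r' = r'`, i.e. `r ≤ r'`). -/
noncomputable def atomsBelow {α : Type*} [BooleanAlgebra α] [Fintype α] (r : α) : Finset α :=
  Finset.univ.filter fun b => IsAtomRel b ∧ b ≤ r

/-- A non-associative relation algebra: a Boolean algebra with composition,
converse and identity satisfying the usual axioms (incl. the Peircean law). -/
structure NA (α : Type*) [BooleanAlgebra α] where
  comp : α → α → α
  conv : α → α
  e : α
  conv_conv : ∀ x, conv (conv x) = x
  conv_sup : ∀ x y, conv (x ⊔ y) = conv x ⊔ conv y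
  conv_comp : ∀ x y, conv (comp x y) = comp (conv y) (conv x)
  comp_e : ∀ x, comp x e = x
  e_comp : ∀ x, comp e x = x
  comp_sup : ∀ x y z, comp x (y ⊔ z) = comp x y ⊔ comp x z
  peirce : ∀ x y z, comp x y ⊓ conv z = ⊥ ↔ comp y z ⊓ conv x = ⊥

/-- Relational composition of sets of pairs. -/
def relComp {U : Type*} (R S : Set (U × U)) : Set (U × U) :=
  {p | ∃ y, (p.1, y) ∈ R ∧ (y, p.2) ∈ S}

/-- A symmetric qualitative formalism `(A, U, φ)`. -/
structure SQF (α : Type*) [BooleanAlgebra α] [Fintype α] (U : Type*) extends NA α where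
  nonempty_univ : Nonempty U
  φ : α → Set (U × U)
  φ_bot : φ ⊥ = ∅
  φ_conv : ∀ r, φ (conv r) = {p | (p.2, p.1) ∈ φ r}
  φ_inf : ∀ r r', φ (r ⊓ r') = φ r ∩ φ r'
  φ_sup : ∀ r r', φ (r ⊔ r') = φ r ∪ φ r'
  φ_comp : ∀ r r', relComp (φ r) (φ r') ∩ φ ⊤ ⊆ φ (comp r r')

/-- A projection operator between two non-associative relation algebras. -/
structure ProjOp {α β : Type*} [BooleanAlgebra α] [BooleanAlgebra β]
    (A : NA α) (B : NA β) where
  f : α → β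
  map_sup : ∀ r r', f (r ⊔ r') = f r ⊔ f r'
  map_conv : ∀ r, f (A.conv r) = B.conv (f r)

/-- A multi-algebra: a family of finite non-associative relation algebras together
with projection operators between any two distinct components. -/
structure MultiAlg (ι : Type*) [Fintype ι] (α : ι → Type*)
    [∀ i, BooleanAlgebra (α i)] [∀ i, Fintype (α i)] where
  na : ∀ i, NA (α i)
  proj : ∀ i j, i ≠ j → α i → α j
  proj_sup : ∀ i j (h : i ≠ j) (r r' : α i),
    proj i j h (r ⊔ r') = proj i j h r ⊔ proj i j h r'
  proj_conv : ∀ i j (h : i ≠ j) (r : α i),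
    proj i j h ((na i).conv r) = (na j).conv (proj i j h r)

namespace MultiAlg

variable {ι : Type*} [Fintype ι] {α : ι → Type*} [∀ i, BooleanAlgebra (α i)]
  [∀ i, Fintype (α i)]

/-- Componentwise composition of multi-algebra relations. -/
def comp (M : MultiAlg ι α) (R R' : ∀ i, α i) : ∀ i, α i :=
  fun i => (M.na i).comp (R i) (R' i)

/-- Componentwise converse of multi-algebra relations. -/
def conv (M : MultiAlg ι α) (R : ∀ i, α i) : ∀ i, α i :=
  fun i => (M.na i).conv (R i)

/-- A basic relation is a tuple of atoms. -/
def Basic (M : MultiAlg ι α) (R : ∀ i, α i) : Prop := ∀ i, IsAtomRel (R i)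

/-- `R` is closed under projection: `Rⱼ ⊆ ↱ⁱʲ(Rᵢ)` for all distinct `i, j`. -/
def RelClosedProj (M : MultiAlg ι α) (R : ∀ i, α i) : Prop :=
  ∀ i j (h : i ≠ j), R j ≤ M.proj i j h (R i)

/-- One pass of the projection-closure iteration: replace each `Rⱼ` by
`Rⱼ ⊓ ↱ⁱʲ(Rᵢ)` for all `i ≠ j`. -/
noncomputable def pstep (M : MultiAlg ι α) (R : ∀ i, α i) : ∀ i, α i :=
  fun j => R j ⊓ Finset.univ.inf fun i => if h : i ≠ j then M.proj i j h (R i) else ⊤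

/-- The projection closure `↱R`, obtained by iterating the refinement step
until a fixed point is reached (reached after at most `card` steps). -/
noncomputable def pcl (M : MultiAlg ι α) (R : ∀ i, α i) : ∀ i, α i :=
  M.pstep^[Fintype.card (∀ i, α i)] R

/-- A relation is `↱`-consistent if it is closed under projection and
not trivially inconsistent. -/
def PConsistent (M : MultiAlg ι α) (R : ∀ i, α i) : Prop :=
  M.RelClosedProj R ∧ ∀ i, R i ≠ ⊥

/-- The inverse projection operator `↰ⁱʲ` of `↱ⁱʲ`, defined on atoms by
`b ≤ ↰ⁱʲ(b')` iff `b' ≤ ↱ⁱʲ(b)` and extended by union. -/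
noncomputable def iproj (M : MultiAlg ι α) (i j : ι) (h : i ≠ j) (r : α j) : α i :=
  (Finset.univ.filter fun b : α i =>
    IsAtomRel b ∧ ∃ b' : α j, IsAtomRel b' ∧ b' ≤ r ∧ b' ≤ M.proj i j h b).sup id

/-- `PathUp M E i j l x y`: following the directed path `l = [i, …, j]` of edges of `E`
upwards, the composite of the direct projections along it maps `x : α i` to `y : α j`. -/
inductive PathUp (M : MultiAlg ι α) (E : ι → ι → Prop) : ∀ i j : ι, List ι → α i → α j → Prop
  | refl (i : ι) (x : α i) : PathUp M E i i [i] x x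
  | step {i j k : ι} {l : List ι} (e : E i j) (h : i ≠ j) (x : α i) {y : α k} :
      PathUp M E j k l (M.proj i j h x) y → PathUp M E i k (i :: l) x y

/-- `PathDown M E i j l x y`: following the path `l = [i, …, j]` downwards along
reversed edges of `E`, the composite of the inverse projections maps `x : α i` to
`y : α j`. -/
inductive PathDown (M : MultiAlg ι α) (E : ι → ι → Prop) : ∀ i j : ι, List ι → α i → α j → Prop
  | refl (i : ι) (x : α i) : PathDown M E i i [i] x x
  | step {i j k : ι} {l : List ι} (e : E j i) (h : j ≠ i) (x : α i) {y : α k} :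
      PathDown M E j k l (M.iproj j i h x) y → PathDown M E i k (i :: l) x y

end MultiAlg

/-- A plenary anti-tree structure on a multi-algebra: an anti-tree (a unique directed
path from every node to the root) on the components such that, along the (unique)
duplicate-free chain `i = k₀ → ⋯ → k_s ← ⋯ ← k_{s+t+1} = j` connecting two distinct
components, the composite of the direct projections going up and of the inverse
projections going down refines the direct projection `↱ⁱʲ` on every atom.
A multi-algebra admitting such a structure is a tree multi-algebra. -/
structure PlenaryAntiTree {ι : Type*} [Fintype ι] {α : ι → Type*}
    [∀ i, BooleanAlgebra (α i)] [∀ i, Fintype (α i)] (M : MultiAlg ι α) where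
  E : ι → ι → Prop
  root : ι
  unique_path : ∀ v : ι, v ≠ root →
    ∃! l : List ι, l.head? = some v ∧ l.getLast? = some root ∧ List.Chain' E l
  plenary : ∀ i j (hij : i ≠ j) (b : α i), IsAtomRel b →
    ∀ (w : ι) (lu ld : List ι) (y : α w) (z : α j),
      MultiAlg.PathUp M E i w lu b y → MultiAlg.PathDown M E w j ld y z →
      (lu ++ ld.tail).Nodup → z ≤ M.proj i j hij b

/-- A sequential formalism `(A, U, I)` over a multi-algebra. -/
structure SeqFormalism (ι : Type*) [Fintype ι] (α : ι → Type*)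
    [∀ i, BooleanAlgebra (α i)] [∀ i, Fintype (α i)] (U : Type*) where
  M : MultiAlg ι α
  I : (∀ i, α i) → Set (U × U)
  I_pcl : ∀ R, I (M.pcl R) = I R
  I_conv : ∀ R, I (M.conv R) = {p | (p.2, p.1) ∈ I R}
  I_bot : I ⊥ = ∅
  I_comp : ∀ R R', relComp (I R) (I R') ∩ I ⊤ ⊆ I (M.comp R R')
  I_inf : ∀ R R', I (R ⊓ R') = I R ∩ I R'
  I_basic : ∀ R, I R = ⋃ B ∈ {B : ∀ i, α i | M.Basic B ∧ B ≤ R}, I B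

section Networks

variable {ι : Type*} [Fintype ι] {α : ι → Type*} [∀ i, BooleanAlgebra (α i)]
  [∀ i, Fintype (α i)] {U : Type*} {V : Type*} [Fintype V]

/-- A network (over variables `V`) is trivially inconsistent if some component of some
constraint between distinct variables is `⊥`. -/
def NetTrivIncons (N : V → V → ∀ i, α i) : Prop := ∃ x y : V, x ≠ y ∧ ∃ i, N x y i = ⊥

/-- A scenario: all constraints between distinct variables are basic. -/
def Scenario (M : MultiAlg ι α) (N : V → V → ∀ i, α i) : Prop :=
  ∀ x y : V, x ≠ y → M.Basic (N x y)

/-- `N` refines `N'`. -/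
def Refines (N N' : V → V → ∀ i, α i) : Prop := ∀ x y : V, x ≠ y → N x y ≤ N' x y

/-- `u` is a solution of the network `N`. -/
def IsSolution (F : SeqFormalism ι α U) (N : V → V → ∀ i, α i) (u : V → U) : Prop :=
  ∀ x y : V, x ≠ y → (u x, u y) ∈ F.I (N x y)

/-- A network is satisfiable if it has a solution. -/
def NetSat (F : SeqFormalism ι α U) (N : V → V → ∀ i, α i) : Prop :=
  ∃ u : V → U, IsSolution F N u

/-- The network is closed under composition. -/
def ClosedComp (M : MultiAlg ι α) (N : V → V → ∀ i, α i) : Prop :=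
  ∀ x y z : V, x ≠ y → y ≠ z → x ≠ z → N x z ≤ M.comp (N x y) (N y z)

/-- The network is closed under projection. -/
def NetClosedProj (M : MultiAlg ι α) (N : V → V → ∀ i, α i) : Prop :=
  ∀ x y : V, x ≠ y → M.RelClosedProj (N x y)

/-- Algebraically closed: closed under composition and projection. -/
def AlgClosed (M : MultiAlg ι α) (N : V → V → ∀ i, α i) : Prop :=
  ClosedComp M N ∧ NetClosedProj M N

/-- Algebraically consistent: algebraically closed and not trivially inconsistent. -/
def AlgConsistent (M : MultiAlg ι α) (N : V → V → ∀ i, α i) : Prop :=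
  AlgClosed M N ∧ ¬ NetTrivIncons N

/-- One pass of the algebraic-closure iteration: close each constraint under projection
and refine it by all compositions `N^{xy} ∘ N^{yz}`. -/
noncomputable def aclStep (M : MultiAlg ι α) (N : V → V → ∀ i, α i) : V → V → ∀ i, α i :=
  fun x z => if x = z then N x z else
    M.pcl (N x z) ⊓ Finset.univ.inf fun y =>
      if x ≠ y ∧ y ≠ z then M.comp (N x y) (N y z) else ⊤

/-- The algebraic closure of a network: iterate the refinement operations until a
fixed point is reached. -/
noncomputable def acl (M : MultiAlg ι α) (N : V → V → ∀ i, α i) : V → V → ∀ i, α i :=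
  (aclStep M)^[Fintype.card (V → V → ∀ i, α i)] N

/-- Closing a network under projection only. -/
noncomputable def netProjClose (M : MultiAlg ι α) (N : V → V → ∀ i, α i) :
    V → V → ∀ i, α i :=
  fun x y => if x = y then N x y else M.pcl (N x y)

/-- One pass of the composition-closure iteration. -/
noncomputable def compStep (M : MultiAlg ι α) (N : V → V → ∀ i, α i) : V → V → ∀ i, α i :=
  fun x z => if x = z then N x z else
    N x z ⊓ Finset.univ.inf fun y =>
      if x ≠ y ∧ y ≠ z then M.comp (N x y) (N y z) else ⊤

/-- Closing a network under composition only. -/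
noncomputable def compClose (M : MultiAlg ι α) (N : V → V → ∀ i, α i) : V → V → ∀ i, α i :=
  (compStep M)^[Fintype.card (V → V → ∀ i, α i)] N

/-- A network over a subset `S` of the multi-algebra. -/
def NetworkOver (S : Set (∀ i, α i)) (N : V → V → ∀ i, α i) : Prop :=
  ∀ x y : V, x ≠ y → N x y ∈ S

end Networks

section Subsets

variable {ι : Type*} [Fintype ι] {α : ι → Type*} [∀ i, BooleanAlgebra (α i)]
  [∀ i, Fintype (α i)] {U : Type*}

/-- `S` is `↱`-closed: the projection closure of any relation of `S` is in `S`. -/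
def PclClosed (M : MultiAlg ι α) (S : Set (∀ i, α i)) : Prop :=
  ∀ R ∈ S, M.pcl R ∈ S

/-- `S` is `∘∧`-closed: `(R ∘ R') ∧ R'' ∈ S` for all `R, R', R'' ∈ S`. -/
def CompInfClosed (M : MultiAlg ι α) (S : Set (∀ i, α i)) : Prop :=
  ∀ R ∈ S, ∀ R' ∈ S, ∀ R'' ∈ S, (M.comp R R') ⊓ R'' ∈ S

/-- `S` is atomizable: every satisfiable relation of `S` contains a satisfiable
basic relation belonging to `S`. -/
def Atomizable (F : SeqFormalism ι α U) (S : Set (∀ i, α i)) : Prop :=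
  ∀ R ∈ S, F.I R ≠ ∅ → ∃ B ∈ S, F.M.Basic B ∧ B ≤ R ∧ F.I B ≠ ∅

/-- `S` is dissociable: closing any network over `S` under projection then under
composition yields a network that is algebraically consistent or trivially
inconsistent. -/
def Dissociable (M : MultiAlg ι α) (S : Set (∀ i, α i)) : Prop :=
  ∀ (V : Type) [Fintype V], ∀ N : V → V → ∀ i, α i, NetworkOver S N →
    AlgConsistent M (compClose M (netProjClose M N)) ∨
      NetTrivIncons (compClose M (netProjClose M N))

/-- `S` is algebraically tractable: a network over `S` is satisfiable iff its
algebraic closure is not trivially inconsistent. -/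
def AlgTractable (F : SeqFormalism ι α U) (S : Set (∀ i, α i)) : Prop :=
  ∀ (V : Type) [Fintype V], ∀ N : V → V → ∀ i, α i, NetworkOver S N →
    (NetSat F N ↔ ¬ NetTrivIncons (acl F.M N))

/-- The `i`-th slice of a subset of a multi-algebra. -/
def sliceSet (S : Set (∀ i, α i)) (i : ι) : Set (α i) := {r | ∃ R ∈ S, R i = r}

end Subsets

section SingleAlgebraNetworks

variable {β : Type*} [BooleanAlgebra β] [Fintype β]

/-- One pass of the (classical, single-algebra) composition-closure iteration. -/
noncomputable def sCompStep {V : Type*} [Fintype V] (na : NA β) (n : V → V → β) :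
    V → V → β :=
  fun x z => if x = z then n x z else
    n x z ⊓ Finset.univ.inf fun y =>
      if x ≠ y ∧ y ≠ z then na.comp (n x y) (n y z) else ⊤

/-- The (classical) algebraic closure of a network over a single algebra. -/
noncomputable def sCompClose {V : Type*} [Fintype V] (na : NA β) (n : V → V → β) :
    V → V → β :=
  (sCompStep na)^[Fintype.card (V → V → β)] n

/-- Closure under composition for a network over a single algebra. -/
def sClosedComp {V : Type*} (na : NA β) (n : V → V → β) : Prop :=
  ∀ x y z : V, x ≠ y → y ≠ z → x ≠ z → n x z ≤ na.comp (n x y) (n y z)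

/-- A classical subclass is minimal: the algebraic closure of any network over it is
the minimal network, i.e. every basic relation contained in a relation of the closure
extends to an algebraically closed scenario refining the closure. -/
def SliceMinimal (na : NA β) (Si : Set β) : Prop :=
  ∀ (V : Type) [Fintype V], ∀ n : V → V → β, (∀ x y : V, x ≠ y → n x y ∈ Si) →
    ∀ x y : V, x ≠ y → ∀ b : β, IsAtomRel b → b ≤ sCompClose na n x y →
      ∃ s : V → V → β, (∀ p q : V, p ≠ q → IsAtomRel (s p q)) ∧
        (∀ p q : V, p ≠ q → s p q ≤ sCompClose na n p q) ∧
        s x y = b ∧ sClosedComp na s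

end SingleAlgebraNetworks
section AuxGeneral

/-- In a finite poset, iterating a decreasing map `card` times reaches a fixed point. -/
lemma iterate_card_fix {β : Type*} [Fintype β] [PartialOrder β] (f : β → β)
    (hf : ∀ a, f a ≤ a) (a : β) : f (f^[Fintype.card β] a) = f^[Fintype.card β] a := by
  set g : ℕ → β := fun n => f^[n] a with hg
  have hsucc : ∀ n, g (n + 1) = f (g n) := fun n => Function.iterate_succ_apply' f n a
  have hanti : Antitone g := antitone_nat_of_succ_le fun n => by rw [hsucc]; exact hf _
  obtain ⟨x, y, hxy, heq⟩ := Fintype.exists_ne_map_eq_of_card_lt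
      (fun k : Fin (Fintype.card β + 1) => g (k : ℕ)) (by simp)
  wlog hlt : (x : ℕ) < (y : ℕ) generalizing x y
  · exact this y x hxy.symm heq.symm
      (lt_of_le_of_ne (le_of_not_gt hlt) (fun h => hxy (Fin.ext h.symm)))
  · -- g is constant from x onwards
    have hfixx : f (g x) = g x := by
      have h1 : f (g (x : ℕ)) ≤ g (x : ℕ) := hf _
      have h2 : g (x : ℕ) ≤ f (g (x : ℕ)) := by
        rw [← hsucc]; exact heq ▸ hanti hlt
      exact le_antisymm h1 h2
    have hconst : ∀ m, (x : ℕ) ≤ m → g m = g (x : ℕ) := by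
      intro m hm
      induction m with
      | zero =>
        have : (x : ℕ) = 0 := Nat.le_zero.mp hm
        rw [this]
      | succ m ih =>
        rcases Nat.lt_or_ge (x : ℕ) (m + 1) with h | h
        · have hxm : (x : ℕ) ≤ m := by omega
          rw [hsucc, ih hxm, hfixx]
        · have : (x : ℕ) = m + 1 := le_antisymm hm h
          rw [this]
      
    have hxcard : (x : ℕ) ≤ Fintype.card β := by
      have := y.isLt; omega
    show f (g (Fintype.card β)) = g (Fintype.card β)
    rw [hconst _ hxcard, hfixx]

section AuxNA

variable {β : Type*} [BooleanAlgebra β]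

lemma NA.comp_sup_left (na : NA β) (x y z : β) :
    na.comp (x ⊔ y) z = na.comp x z ⊔ na.comp y z := by
  have hinj : Function.Injective na.conv := Function.Involutive.injective na.conv_conv
  apply hinj
  rw [na.conv_comp, na.conv_sup, na.conv_sup, na.comp_sup, ← na.conv_comp, ← na.conv_comp]

lemma NA.comp_mono (na : NA β) {x x' y y' : β} (hx : x ≤ x') (hy : y ≤ y') :
    na.comp x y ≤ na.comp x' y' := by
  have h2 : na.comp x' y ≤ na.comp x' y' :=
    calc na.comp x' y ≤ na.comp x' y ⊔ na.comp x' y' := le_sup_left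
    _ = na.comp x' y' := by rw [← na.comp_sup, sup_eq_right.mpr hy]
  have h1 : na.comp x y ≤ na.comp x' y :=
    calc na.comp x y ≤ na.comp x y ⊔ na.comp x' y := le_sup_left
    _ = na.comp x' y := by rw [← na.comp_sup_left, sup_eq_right.mpr hx]
  exact h1.trans h2

lemma IsAtomRel.eq_of_le {b c : β} (hb : IsAtomRel b) (hle : c ≤ b) (hc : c ≠ ⊥) :
    c = b := by
  have hcb : c ⊓ b = c := inf_eq_left.mpr hle
  rcases hb.2 c with h | h
  · rw [← hcb, h]
  · exact absurd (by rw [← hcb, h]) hc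

end AuxNA

section AuxMulti

variable {ι : Type*} [Fintype ι] {α : ι → Type*} [∀ i, BooleanAlgebra (α i)]
  [∀ i, Fintype (α i)] {U : Type*}

lemma MultiAlg.pstep_le (M : MultiAlg ι α) (R : ∀ i, α i) : M.pstep R ≤ R :=
  fun _ => inf_le_left

lemma MultiAlg.pcl_le (M : MultiAlg ι α) (R : ∀ i, α i) : M.pcl R ≤ R := by
  have h : ∀ k, M.pstep^[k] R ≤ R := by
    intro k
    induction k with
    | zero => exact le_rfl
    | succ k ih =>
      rw [Function.iterate_succ_apply']
      exact (M.pstep_le _).trans ih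
  exact h _

lemma MultiAlg.pstep_eq (M : MultiAlg ι α) {R : ∀ i, α i} (h : M.RelClosedProj R) :
    M.pstep R = R := by
  funext j
  refine inf_eq_left.mpr (Finset.le_inf fun i _ => ?_)
  by_cases hij : i ≠ j
  · rw [dif_pos hij]; exact h i j hij
  · rw [dif_neg hij]; exact le_top

lemma MultiAlg.pcl_eq (M : MultiAlg ι α) {R : ∀ i, α i} (h : M.RelClosedProj R) :
    M.pcl R = R := Function.iterate_fixed (M.pstep_eq h) _

lemma MultiAlg.relClosedProj_of_pstep (M : MultiAlg ι α) {R : ∀ i, α i}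
    (h : M.pstep R = R) : M.RelClosedProj R := by
  intro i j hij
  have h1 : M.pstep R j ≤ (if h' : i ≠ j then M.proj i j h' (R i) else ⊤) :=
    inf_le_right.trans (Finset.inf_le (Finset.mem_univ i))
  rw [h, dif_pos hij] at h1
  exact h1

lemma MultiAlg.pstep_pcl_fix (M : MultiAlg ι α) (R : ∀ i, α i) :
    M.pstep (M.pcl R) = M.pcl R :=
  iterate_card_fix M.pstep M.pstep_le R

lemma MultiAlg.relClosedProj_pcl (M : MultiAlg ι α) (R : ∀ i, α i) :
    M.RelClosedProj (M.pcl R) := M.relClosedProj_of_pstep (M.pstep_pcl_fix R)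

lemma SeqFormalism.I_mono (F : SeqFormalism ι α U) {R R' : ∀ i, α i} (h : R ≤ R') :
    F.I R ⊆ F.I R' := by
  intro p hp
  rw [F.I_basic R] at hp
  rw [F.I_basic R']
  simp only [Set.mem_setOf_eq, Set.mem_iUnion] at hp ⊢
  obtain ⟨B, hB, hpB⟩ := hp
  exact ⟨B, ⟨hB.1, hB.2.trans h⟩, hpB⟩

lemma SeqFormalism.I_eq_empty (F : SeqFormalism ι α U) {R : ∀ i, α i} (i : ι)
    (h : R i = ⊥) : F.I R = ∅ := by
  rw [F.I_basic R]
  ext p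
  simp only [Set.mem_setOf_eq, Set.mem_iUnion, Set.mem_empty_iff_false, iff_false, not_exists]
  rintro B ⟨hBasic, hle⟩ -
  have h2 : B i ≤ ⊥ := h ▸ hle i
  exact (hBasic i).1 (le_bot_iff.mp h2)

/-- A satisfiable basic relation is a fixed point of the projection closure. -/
lemma pcl_eq_of_basic_sat (F : SeqFormalism ι α U) {B : ∀ i, α i}
    (hB : F.M.Basic B) (hI : F.I B ≠ ∅) : F.M.pcl B = B := by
  have hle : F.M.pcl B ≤ B := F.M.pcl_le B
  have hne : ∀ i, F.M.pcl B i ≠ ⊥ := by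
    intro i hbot
    exact hI (by rw [← F.I_pcl B]; exact F.I_eq_empty i hbot)
  funext i
  exact (hB i).eq_of_le (hle i) (hne i)

end AuxMulti

section AuxNet

variable {ι : Type*} [Fintype ι] {α : ι → Type*} [∀ i, BooleanAlgebra (α i)]
  [∀ i, Fintype (α i)] {U : Type*} {V : Type*} [Fintype V]

lemma compStep_le (M : MultiAlg ι α) (N : V → V → ∀ i, α i) (x z : V) :
    compStep M N x z ≤ N x z := by
  unfold compStep
  by_cases h : x = z
  · rw [if_pos h]
  · rw [if_neg h]; exact inf_le_left

lemma compStep_iter_le (M : MultiAlg ι α) (N : V → V → ∀ i, α i) (k : ℕ) (x z : V) :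
    (compStep M)^[k] N x z ≤ N x z := by
  induction k with
  | zero => exact le_rfl
  | succ k ih =>
    rw [Function.iterate_succ_apply']
    exact (compStep_le M _ x z).trans ih

lemma compClose_le (M : MultiAlg ι α) (N : V → V → ∀ i, α i) (x z : V) :
    compClose M N x z ≤ N x z := compStep_iter_le M N _ x z

lemma aclStep_le (M : MultiAlg ι α) (N : V → V → ∀ i, α i) (x z : V) :
    aclStep M N x z ≤ N x z := by
  unfold aclStep
  by_cases h : x = z
  · rw [if_pos h]
  · rw [if_neg h]; exact inf_le_left.trans (M.pcl_le _)

lemma acl_le (M : MultiAlg ι α) (N : V → V → ∀ i, α i) (x z : V) :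
    acl M N x z ≤ N x z := by
  have h : ∀ k, (aclStep M)^[k] N x z ≤ N x z := by
    intro k
    induction k with
    | zero => exact le_rfl
    | succ k ih =>
      rw [Function.iterate_succ_apply']
      exact (aclStep_le M _ x z).trans ih
  exact h _

lemma inf_fold_mem (M : MultiAlg ι α) {S : Set (∀ i, α i)} (hCI : CompInfClosed M S)
    (g : V → ∀ i, α i)
    (hg : ∀ y, g y = ⊤ ∨ ∃ R ∈ S, ∃ R' ∈ S, g y = M.comp R R')
    {R0 : ∀ i, α i} (hR0 : R0 ∈ S) (t : Finset V) : R0 ⊓ t.inf g ∈ S := by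
  classical
  induction t using Finset.induction with
  | empty => simpa using hR0
  | @insert a t ha ih =>
    rw [Finset.inf_insert, inf_left_comm]
    rcases hg a with htop | ⟨R, hR, R', hR', hga⟩
    · rw [htop, top_inf_eq]; exact ih
    · rw [hga]; exact hCI R hR R' hR' _ ih

lemma compStep_over (M : MultiAlg ι α) {S : Set (∀ i, α i)} (hCI : CompInfClosed M S)
    {N : V → V → ∀ i, α i} (hN : NetworkOver S N) : NetworkOver S (compStep M N) := by
  intro x z hxz
  unfold compStep
  rw [if_neg hxz]
  refine inf_fold_mem M hCI _ (fun y => ?_) (hN x z hxz) _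
  by_cases h : x ≠ y ∧ y ≠ z
  · exact Or.inr ⟨N x y, hN x y h.1, N y z, hN y z h.2, by rw [if_pos h]⟩
  · exact Or.inl (if_neg h)

lemma compClose_over (M : MultiAlg ι α) {S : Set (∀ i, α i)} (hCI : CompInfClosed M S)
    {N : V → V → ∀ i, α i} (hN : NetworkOver S N) : NetworkOver S (compClose M N) := by
  unfold compClose
  generalize Fintype.card (V → V → ∀ i, α i) = k
  induction k with
  | zero => exact hN
  | succ k ih =>
    rw [Function.iterate_succ_apply']
    exact compStep_over M hCI ih

lemma aclStep_over (M : MultiAlg ι α) {S : Set (∀ i, α i)} (hCI : CompInfClosed M S)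
    (hPcl : PclClosed M S) {N : V → V → ∀ i, α i} (hN : NetworkOver S N) :
    NetworkOver S (aclStep M N) := by
  intro x z hxz
  unfold aclStep
  rw [if_neg hxz]
  refine inf_fold_mem M hCI _ (fun y => ?_) (hPcl _ (hN x z hxz)) _
  by_cases h : x ≠ y ∧ y ≠ z
  · exact Or.inr ⟨N x y, hN x y h.1, N y z, hN y z h.2, by rw [if_pos h]⟩
  · exact Or.inl (if_neg h)

lemma acl_over (M : MultiAlg ι α) {S : Set (∀ i, α i)} (hCI : CompInfClosed M S)
    (hPcl : PclClosed M S) {N : V → V → ∀ i, α i} (hN : NetworkOver S N) :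
    NetworkOver S (acl M N) := by
  unfold acl
  generalize Fintype.card (V → V → ∀ i, α i) = k
  induction k with
  | zero => exact hN
  | succ k ih =>
    rw [Function.iterate_succ_apply']
    exact aclStep_over M hCI hPcl ih

end AuxNet

section AuxSlice

variable {ι : Type*} [Fintype ι] {α : ι → Type*} [∀ i, BooleanAlgebra (α i)]
  [∀ i, Fintype (α i)] {β : Type*} [BooleanAlgebra β] [Fintype β]
  {V : Type*} [Fintype V]

lemma sCompStep_eq (na : NA β) {n : V → V → β} (h : sClosedComp na n) :
    sCompStep na n = n := by
  funext x z
  unfold sCompStep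
  by_cases hxz : x = z
  · rw [if_pos hxz]
  · rw [if_neg hxz]
    refine inf_eq_left.mpr (Finset.le_inf fun y _ => ?_)
    by_cases hy : x ≠ y ∧ y ≠ z
    · rw [if_pos hy]; exact h x y z hy.1 hy.2 hxz
    · rw [if_neg hy]; exact le_top

lemma sCompClose_eq (na : NA β) {n : V → V → β} (h : sClosedComp na n) :
    sCompClose na n = n := Function.iterate_fixed (sCompStep_eq na h) _

lemma scen_le_sCompStep_iter (na : NA β) {s n : V → V → β}
    (hs : sClosedComp na s) (hle : ∀ p q, p ≠ q → s p q ≤ n p q) (k : ℕ) :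
    ∀ p q, p ≠ q → s p q ≤ (sCompStep na)^[k] n p q := by
  induction k with
  | zero => exact hle
  | succ k ih =>
    intro p q hpq
    rw [Function.iterate_succ_apply']
    unfold sCompStep
    rw [if_neg hpq]
    refine le_inf (ih p q hpq) (Finset.le_inf fun y _ => ?_)
    by_cases hy : p ≠ y ∧ y ≠ q
    · rw [if_pos hy]
      exact (hs p y q hy.1 hy.2 hpq).trans (na.comp_mono (ih p y hy.1) (ih y q hy.2))
    · rw [if_neg hy]; exact le_top

lemma compStep_slice (M : MultiAlg ι α) (N : V → V → ∀ i, α i) (i : ι) :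
    (fun p q => compStep M N p q i) = sCompStep (M.na i) (fun p q => N p q i) := by
  funext p q
  unfold compStep sCompStep
  by_cases h : p = q
  · rw [if_pos h, if_pos h]
  · rw [if_neg h, if_neg h]
    show (N p q ⊓ _) i = _
    rw [Pi.inf_apply]
    congr 1
    rw [Finset.inf_apply]
    refine Finset.inf_congr rfl fun y _ => ?_
    by_cases hy : p ≠ y ∧ y ≠ q
    · rw [if_pos hy, if_pos hy]; rfl
    · rw [if_neg hy, if_neg hy]; rfl

lemma compStep_slice_iter (M : MultiAlg ι α) (N : V → V → ∀ i, α i) (i : ι) (k : ℕ) :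
    (fun p q => (compStep M)^[k] N p q i) = (sCompStep (M.na i))^[k] (fun p q => N p q i) := by
  induction k with
  | zero => rfl
  | succ k ih =>
    rw [Function.iterate_succ_apply', Function.iterate_succ_apply', ← ih]
    exact compStep_slice M _ i

end AuxSlice

section AuxSol

variable {ι : Type*} [Fintype ι] {α : ι → Type*} [∀ i, BooleanAlgebra (α i)]
  [∀ i, Fintype (α i)] {U : Type*} {V : Type*} [Fintype V]

lemma sol_top (F : SeqFormalism ι α U) {N : V → V → ∀ i, α i} {u : V → U}
    (hu : IsSolution F N u) {x z : V} (hxz : x ≠ z) : (u x, u z) ∈ F.I ⊤ :=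
  F.I_mono le_top (hu x z hxz)

lemma sol_inf_comp (F : SeqFormalism ι α U) {N : V → V → ∀ i, α i} {u : V → U}
    (hu : IsSolution F N u) {x z : V} (hxz : x ≠ z) (t : Finset V) :
    (u x, u z) ∈ F.I (t.inf fun y => if x ≠ y ∧ y ≠ z then F.M.comp (N x y) (N y z) else ⊤) := by
  classical
  induction t using Finset.induction with
  | empty => simpa using sol_top F hu hxz
  | @insert a t ha ih =>
    rw [Finset.inf_insert, F.I_inf]
    refine ⟨?_, ih⟩
    by_cases h : x ≠ a ∧ a ≠ z
    · rw [if_pos h]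
      exact F.I_comp _ _ ⟨⟨u a, hu x a h.1, hu a z h.2⟩, sol_top F hu hxz⟩
    · rw [if_neg h]; exact sol_top F hu hxz

lemma sol_aclStep (F : SeqFormalism ι α U) {N : V → V → ∀ i, α i} {u : V → U}
    (hu : IsSolution F N u) : IsSolution F (aclStep F.M N) u := by
  intro x z hxz
  unfold aclStep
  rw [if_neg hxz, F.I_inf]
  exact ⟨by rw [F.I_pcl]; exact hu x z hxz, sol_inf_comp F hu hxz _⟩

lemma sol_acl (F : SeqFormalism ι α U) {N : V → V → ∀ i, α i} {u : V → U}
    (hu : IsSolution F N u) : IsSolution F (acl F.M N) u := by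
  unfold acl
  generalize Fintype.card (V → V → ∀ i, α i) = k
  induction k with
  | zero => exact hu
  | succ k ih =>
    rw [Function.iterate_succ_apply']
    exact sol_aclStep F ih

end AuxSol

section KeyStep

variable {ι : Type*} [Fintype ι] {α : ι → Type*} [∀ i, BooleanAlgebra (α i)]
  [∀ i, Fintype (α i)] {U : Type*}

lemma key_step (F : SeqFormalism ι α U) (S : Set (∀ i, α i))
    (hCI : CompInfClosed F.M S) (hAtom : Atomizable F S)
    (hD1 : ∀ i, SliceMinimal (F.M.na i) (sliceSet S i))
    (hD2 : Dissociable F.M S)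
    (hD3 : ∀ R ∈ S, F.M.PConsistent R → F.I R ≠ ∅)
    {V : Type} [Fintype V] {N : V → V → ∀ i, α i}
    (hover : NetworkOver S N) (hcons : AlgConsistent F.M N) {x y : V} (hxy : x ≠ y) :
    ∃ N' : V → V → ∀ i, α i, NetworkOver S N' ∧ AlgConsistent F.M N' ∧
      (∀ p q, p ≠ q → N' p q ≤ N p q) ∧ F.M.Basic (N' x y) ∧
      (∀ p q, p ≠ q → F.M.Basic (N p q) → F.M.Basic (N' p q)) := by
  classical
  -- the constraint on (x, y) is ↱-consistent, hence satisfiable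
  have hP : F.M.PConsistent (N x y) :=
    ⟨hcons.1.2 x y hxy, fun i hbot => hcons.2 ⟨x, y, hxy, i, hbot⟩⟩
  obtain ⟨B, hBS, hBbasic, hBle, hBI⟩ :=
    hAtom _ (hover x y hxy) (hD3 _ (hover x y hxy) hP)
  -- refine the constraint on (x, y) to the satisfiable basic relation B
  set N₁ : V → V → ∀ i, α i := fun p q => if p = x ∧ q = y then B else N p q with hN₁
  have hN₁xy : N₁ x y = B := if_pos ⟨rfl, rfl⟩
  have hN₁le : ∀ p q, p ≠ q → N₁ p q ≤ N p q := by
    intro p q hpq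
    by_cases h : p = x ∧ q = y
    · rw [show N₁ p q = B from if_pos h, h.1, h.2]; exact hBle
    · rw [show N₁ p q = N p q from if_neg h]
  have hN₁over : NetworkOver S N₁ := by
    intro p q hpq
    by_cases h : p = x ∧ q = y
    · rw [show N₁ p q = B from if_pos h]; exact hBS
    · rw [show N₁ p q = N p q from if_neg h]; exact hover p q hpq
  -- N₁ is already closed under projection
  have hproj : netProjClose F.M N₁ = N₁ := by
    funext p q
    unfold netProjClose
    by_cases hpq : p = q
    · rw [if_pos hpq]
    · rw [if_neg hpq]
      by_cases h : p = x ∧ q = y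
      · rw [show N₁ p q = B from if_pos h]
        exact pcl_eq_of_basic_sat F hBbasic hBI
      · rw [show N₁ p q = N p q from if_neg h]
        exact F.M.pcl_eq (hcons.1.2 p q hpq)
  set C : V → V → ∀ i, α i := compClose F.M N₁ with hC
  have hCle₁ : ∀ p q, C p q ≤ N₁ p q := compClose_le F.M N₁
  -- the composition closure of N₁ is not trivially inconsistent (uses D1)
  have htriv : ¬ NetTrivIncons C := by
    rintro ⟨p, q, hpq, i, hbot⟩
    set n : V → V → α i := fun a b => N a b i with hn
    have hnover : ∀ a b, a ≠ b → n a b ∈ sliceSet S i :=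
      fun a b h => ⟨N a b, hover a b h, rfl⟩
    have hnclosed : sClosedComp (F.M.na i) n :=
      fun a b c h1 h2 h3 => hcons.1.1 a b c h1 h2 h3 i
    have hnfix : sCompClose (F.M.na i) n = n := sCompClose_eq _ hnclosed
    have hble : B i ≤ sCompClose (F.M.na i) n x y := by
      rw [hnfix]; exact hBle i
    obtain ⟨s, hsatoms, hsle, hsxy, hsclosed⟩ :=
      hD1 i V n hnover x y hxy (B i) (hBbasic i) hble
    simp only [hnfix] at hsle
    have hsle₁ : ∀ a b, a ≠ b → s a b ≤ (fun a b => N₁ a b i) a b := by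
      intro a b hab
      by_cases h : a = x ∧ b = y
      · show s a b ≤ N₁ a b i
        rw [show N₁ a b = B from if_pos h]
        obtain ⟨rfl, rfl⟩ := h
        rw [hsxy]
      · show s a b ≤ N₁ a b i
        rw [show N₁ a b = N a b from if_neg h]
        exact hsle a b hab
    have h1 := scen_le_sCompStep_iter (F.M.na i) hsclosed hsle₁
      (Fintype.card (V → V → ∀ i, α i)) p q hpq
    have h2 : C p q i = (sCompStep (F.M.na i))^[Fintype.card (V → V → ∀ i, α i)]
        (fun a b => N₁ a b i) p q :=
      congrFun (congrFun (compStep_slice_iter F.M N₁ i _) p) q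
    rw [← h2, hbot, le_bot_iff] at h1
    exact (hsatoms p q hpq).1 h1
  -- dissociability: C is algebraically consistent
  have hCcons : AlgConsistent F.M C := by
    rcases hD2 V N₁ hN₁over with h | h
    · rw [hproj] at h; exact h
    · rw [hproj] at h; exact absurd h htriv
  have hCne : ∀ p q, p ≠ q → ∀ i, C p q i ≠ ⊥ :=
    fun p q hpq i hbot => hCcons.2 ⟨p, q, hpq, i, hbot⟩
  refine ⟨C, compClose_over F.M hCI hN₁over, hCcons,
      fun p q hpq => (hCle₁ p q).trans (hN₁le p q hpq), ?_, ?_⟩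
  · -- C x y = B is basic
    intro i
    have : C x y i = B i :=
      (hBbasic i).eq_of_le (hN₁xy ▸ hCle₁ x y i) (hCne x y hxy i)
    rw [this]; exact hBbasic i
  · -- basic constraints stay basic
    intro p q hpq hbasic
    intro i
    have hb : IsAtomRel (N₁ p q i) := by
      by_cases h : p = x ∧ q = y
      · rw [show N₁ p q = B from if_pos h]; exact hBbasic i
      · rw [show N₁ p q = N p q from if_neg h]; exact hbasic i
    have : C p q i = N₁ p q i := hb.eq_of_le (hCle₁ p q i) (hCne p q hpq i)
    rw [this]; exact hb

end KeyStep

section Part1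

variable {ι : Type*} [Fintype ι] {α : ι → Type*} [∀ i, BooleanAlgebra (α i)]
  [∀ i, Fintype (α i)] {U : Type*}

lemma part1_aux (F : SeqFormalism ι α U) (S : Set (∀ i, α i))
    (hCI : CompInfClosed F.M S) (hAtom : Atomizable F S)
    (hScen : ∀ (V : Type) [Fintype V] (Sc : V → V → ∀ i, α i),
      Scenario F.M Sc → AlgClosed F.M Sc → NetSat F Sc)
    (hD1 : ∀ i, SliceMinimal (F.M.na i) (sliceSet S i))
    (hD2 : Dissociable F.M S)
    (hD3 : ∀ R ∈ S, F.M.PConsistent R → F.I R ≠ ∅) :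
    ∀ (k : ℕ) (V : Type) [Fintype V] (N : V → V → ∀ i, α i),
      (Finset.univ.filter fun p : V × V => p.1 ≠ p.2 ∧ ¬ F.M.Basic (N p.1 p.2)).card ≤ k →
      NetworkOver S N → AlgConsistent F.M N → NetSat F N := by
  classical
  intro k
  induction k with
  | zero =>
    intro V _ N hcard hover hcons
    have hscen : Scenario F.M N := by
      intro a b hab
      by_contra hb
      have hmem : (a, b) ∈ (Finset.univ.filter
          fun p : V × V => p.1 ≠ p.2 ∧ ¬ F.M.Basic (N p.1 p.2)) :=
        Finset.mem_filter.mpr ⟨Finset.mem_univ _, hab, hb⟩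
      have := Finset.card_pos.mpr ⟨_, hmem⟩
      omega
    exact hScen V N hscen hcons.1
  | succ k ih =>
    intro V _ N hcard hover hcons
    by_cases hall : Scenario F.M N
    · exact hScen V N hall hcons.1
    · obtain ⟨x, hx⟩ := not_forall.mp hall
      obtain ⟨y, hy⟩ := not_forall.mp hx
      obtain ⟨hxy, hnb⟩ := _root_.not_imp.mp hy
      obtain ⟨N', hover', hcons', hle', hbasic', hpres⟩ :=
        key_step F S hCI hAtom hD1 hD2 hD3 hover hcons hxy
      have hsub : (Finset.univ.filter
            fun p : V × V => p.1 ≠ p.2 ∧ ¬ F.M.Basic (N' p.1 p.2)) ⊂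
          (Finset.univ.filter fun p : V × V => p.1 ≠ p.2 ∧ ¬ F.M.Basic (N p.1 p.2)) := by
        refine Finset.ssubset_iff_of_subset ?_ |>.mpr ?_
        · intro p hp
          obtain ⟨-, hpq, hb⟩ := Finset.mem_filter.mp hp
          exact Finset.mem_filter.mpr
            ⟨Finset.mem_univ _, hpq, fun hbN => hb (hpres p.1 p.2 hpq hbN)⟩
        · refine ⟨(x, y), Finset.mem_filter.mpr ⟨Finset.mem_univ _, hxy, hnb⟩, ?_⟩
          intro hmem
          exact (Finset.mem_filter.mp hmem).2.2 hbasic'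
      have hlt := Finset.card_lt_card hsub
      obtain ⟨u, hu⟩ := ih V N' (by omega) hover' hcons'
      exact ⟨u, fun p q hpq => F.I_mono (hle' p q hpq) (hu p q hpq)⟩

end Part1

section AclClosed

variable {ι : Type*} [Fintype ι] {α : ι → Type*} [∀ i, BooleanAlgebra (α i)]
  [∀ i, Fintype (α i)] {V : Type*} [Fintype V]

lemma acl_algClosed (M : MultiAlg ι α) (N : V → V → ∀ i, α i) :
    AlgClosed M (acl M N) := by
  classical
  have hdec : ∀ X : V → V → ∀ i, α i, aclStep M X ≤ X := fun X p q => aclStep_le M X p q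
  have hfix : aclStep M (acl M N) = acl M N := iterate_card_fix (aclStep M) hdec N
  set A := acl M N with hA
  have hfix' : ∀ p q : V, p ≠ q →
      M.pcl (A p q) ⊓ (Finset.univ.inf fun y =>
        if p ≠ y ∧ y ≠ q then M.comp (A p y) (A y q) else ⊤) = A p q := by
    intro p q hpq
    have h := congrFun (congrFun hfix p) q
    simp only [aclStep, if_neg hpq] at h
    exact h
  constructor
  · intro x z w hxz hzw hxw
    have h := hfix' x w hxw
    calc A x w = _ := h.symm
    _ ≤ Finset.univ.inf fun y =>
        if x ≠ y ∧ y ≠ w then M.comp (A x y) (A y w) else ⊤ := inf_le_right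
    _ ≤ (if x ≠ z ∧ z ≠ w then M.comp (A x z) (A z w) else ⊤) :=
        Finset.inf_le (Finset.mem_univ z)
    _ = M.comp (A x z) (A z w) := if_pos ⟨hxz, hzw⟩
  · intro p q hpq
    have h := hfix' p q hpq
    have h1 : A p q ≤ M.pcl (A p q) := by
      conv_lhs => rw [← h]
      exact inf_le_left
    have heq : M.pcl (A p q) = A p q := le_antisymm (M.pcl_le _) h1
    rw [← heq]
    exact M.relClosedProj_pcl _

end AclClosed
/-- Slicing theorem: for a `∘∧`-closed atomizable subset `S` of a
sequential formalism whose algebraically closed scenarios are satisfiable, if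
(D1) each slice is minimal, (D2) `S` is dissociable, (D3) `↱`-consistent relations
of `S` are satisfiable, then algebraically consistent networks over `S` are
satisfiable; if moreover `S` is `↱`-closed, then `S` is algebraically tractable. -/
theorem stmt_17 {ι : Type*} [Fintype ι] {α : ι → Type*} [∀ i, BooleanAlgebra (α i)]
    [∀ i, Fintype (α i)] {U : Type*} (F : SeqFormalism ι α U)
    (S : Set (∀ i, α i))
    (hCI : CompInfClosed F.M S)
    (hAtom : Atomizable F S)
    (hScen : ∀ (V : Type) [Fintype V] (Sc : V → V → ∀ i, α i),
      Scenario F.M Sc → AlgClosed F.M Sc → NetSat F Sc)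
    (hD1 : ∀ i, SliceMinimal (F.M.na i) (sliceSet S i))
    (hD2 : Dissociable F.M S)
    (hD3 : ∀ R ∈ S, F.M.PConsistent R → F.I R ≠ ∅) :
    (∀ (V : Type) [Fintype V] (N : V → V → ∀ i, α i),
      NetworkOver S N → AlgConsistent F.M N → NetSat F N) ∧
    (PclClosed F.M S → AlgTractable F S) := by
  classical
  have part1 : ∀ (V : Type) [Fintype V] (N : V → V → ∀ i, α i),
      NetworkOver S N → AlgConsistent F.M N → NetSat F N := by
    intro V _ N hover hcons
    exact part1_aux F S hCI hAtom hScen hD1 hD2 hD3 _ V N le_rfl hover hcons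
  refine ⟨part1, ?_⟩
  intro hPcl V _ N hover
  constructor
  · rintro ⟨u, hu⟩ ⟨p, q, hpq, i, hbot⟩
    have hu' := sol_acl F hu
    have hmem := hu' p q hpq
    rw [F.I_eq_empty i hbot] at hmem
    exact hmem
  · intro htriv
    have hAover : NetworkOver S (acl F.M N) := acl_over F.M hCI hPcl hover
    have hAcons : AlgConsistent F.M (acl F.M N) := ⟨acl_algClosed F.M N, htriv⟩
    obtain ⟨u, hu⟩ := part1 V (acl F.M N) hAover hAcons
    exact ⟨u, fun p q hpq => F.I_mono (acl_le F.M N p q) (hu p q hpq)⟩
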